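/- arXiv:2301.01651 — 10 statements merged into one kernel-verified Lean document; each statement's English description precedes it below -/
import Mathlib

section
/- Let f : ℝ^d → ℝ be quasi-convex, let f* = inf_{y∈ℝ^d} f(y), assume the optimal set X* = argmin f is nonempty, and assume f satisfies the Hölder condition of order p > 0 with constant L > 0 relative to ℝ^d. Let η > 0, R ≥ 0, S ≥ 0 with R + S/η < 1, fix x* ∈ X* and set c₀ = ‖x₀ − x*‖. Suppose (x_k), (g_k), (r_k), (s_k) are sequences in ℝ^d with, for every k: g_k ∈ ∂̄*f(x_k) with g_k ≠ 0, ‖r_k‖ ≤ R, ‖s_k‖ ≤ S, ĝ_k = g_k/‖g_k‖ + r_k, and x_{k+1} = x_k − η·ĝ_k + s_k. Then for every integer K ≥ 1: min_{k < K} f(x_k) ≤ f* + L·[ Γ(c₀) + c₀²/(2ηK) ]^p. -/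
open RealInnerProductSpace Metric

/-- Theorem 4.2: the finite-iteration version of the perturbed normalized
quasi-subgradient method on `ℝ^d` (no projection): for every `K ≥ 1`,
`min_{k<K} f(x_k) ≤ f* + L·[Γ(c₀) + c₀²/(2ηK)]^p` with `c₀ = ‖x₀ − x*‖` and
`Γ(c₀) = max{(η/2)(1 + (R + S/η)²), (η/2)(1 − (R + S/η)²) + c₀(R + S/η)}`. -/
theorem deterministic_sgd_finite_iteration {d : ℕ}
    (f : EuclideanSpace ℝ (Fin d) → ℝ)
    (hquasi : ∀ a : ℝ, Convex ℝ {y | f y < a})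
    (fstar : ℝ) (hfstar : fstar = ⨅ y, f y)
    (Xstar : Set (EuclideanSpace ℝ (Fin d)))
    (hXstar : Xstar = {y | ∀ z, f y ≤ f z})
    (hXne : Xstar.Nonempty)
    (p L : ℝ) (hp : 0 < p) (hL : 0 < L)
    (hHolder : ∀ x : EuclideanSpace ℝ (Fin d), f x - fstar ≤ L * infDist x Xstar ^ p)
    (η R S : ℝ) (hη : 0 < η) (hR : 0 ≤ R) (hS : 0 ≤ S) (hRS : R + S / η < 1)
    (xstar : EuclideanSpace ℝ (Fin d)) (hxstar : xstar ∈ Xstar)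
    (x g r s : ℕ → EuclideanSpace ℝ (Fin d))
    (c₀ : ℝ) (hc₀ : c₀ = ‖x 0 - xstar‖)
    (hgsub : ∀ k, ∀ x' : EuclideanSpace ℝ (Fin d),
      f x' < f (x k) → ⟪g k, x' - x k⟫ ≤ 0)
    (hgne : ∀ k, g k ≠ 0)
    (hr : ∀ k, ‖r k‖ ≤ R) (hs : ∀ k, ‖s k‖ ≤ S)
    (hupd : ∀ k, x (k + 1) = x k - η • ((‖g k‖⁻¹ • g k) + r k) + s k)
    (K : ℕ) (hK : 1 ≤ K) :
    ∃ k < K, f (x k) ≤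
      fstar + L * (max ((η / 2) * (1 + (R + S / η) ^ 2))
        ((η / 2) * (1 - (R + S / η) ^ 2) + c₀ * (R + S / η)) +
        c₀ ^ 2 / (2 * η * K)) ^ p := by
  by_contra hcon
  push_neg at hcon
  set ε := R + S / η with hεdef
  have hε0 : 0 ≤ ε := by positivity
  set Γ := max ((η / 2) * (1 + ε ^ 2)) ((η / 2) * (1 - ε ^ 2) + c₀ * ε) with hΓdef
  have hKR : (1:ℝ) ≤ (K:ℝ) := by exact_mod_cast hK
  have hKpos : (0:ℝ) < (K:ℝ) := by linarith
  set t := c₀ ^ 2 / (2 * η * (K:ℝ)) with htdef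
  have hc₀0 : 0 ≤ c₀ := hc₀ ▸ norm_nonneg _
  have ht0 : 0 ≤ t := by positivity
  set B := Γ + t with hBdef
  clear_value B t Γ ε
  have hΓ1 : (η/2) * (1 + ε^2) ≤ Γ := by rw [hΓdef]; exact le_max_left _ _
  have hΓ2 : (η/2) * (1 - ε^2) + c₀ * ε ≤ Γ := by rw [hΓdef]; exact le_max_right _ _
  have hΓη : η / 2 ≤ Γ := le_trans (by linarith [mul_nonneg hη.le (sq_nonneg ε)]) hΓ1
  have hΓh : η * ε ≤ Γ := le_trans (by linarith [mul_nonneg hη.le (sq_nonneg (1 - ε))]) hΓ1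
  have hΓpos : 0 < Γ := lt_of_lt_of_le (by positivity) hΓη
  have hB0 : 0 < B := by rw [hBdef]; linarith
  -- fstar is attained at xstar
  have hxmin : ∀ z, f xstar ≤ f z := by rw [hXstar] at hxstar; exact hxstar
  have hfstar_eq : fstar = f xstar := by
    rw [hfstar]
    refine le_antisymm (ciInf_le ⟨f xstar, ?_⟩ xstar) (le_ciInf hxmin)
    rintro b ⟨y, rfl⟩; exact hxmin y
  have hfstar_le : ∀ y, fstar ≤ f y := fun y => hfstar_eq ▸ hxmin y
  -- far from optimum while still suboptimal
  have hdist : ∀ k, k < K → B < infDist (x k) Xstar := by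
    intro k hk
    by_contra hle
    push_neg at hle
    have h1 : L * infDist (x k) Xstar ^ p ≤ L * B ^ p :=
      mul_le_mul_of_nonneg_left (Real.rpow_le_rpow infDist_nonneg hle hp.le) hL.le
    have h2 := hHolder (x k)
    have h3 := hcon k hk
    linarith
  -- quasi-subgradient gives an angle condition
  have key : ∀ k, k < K → B * ‖g k‖ ≤ ⟪g k, x k - xstar⟫ := by
    intro k hk
    have hg0 : (0:ℝ) < ‖g k‖ := norm_pos_iff.mpr (hgne k)
    have claim : ∀ δ : ℝ, 0 < δ → δ < B → δ * ‖g k‖ ≤ ⟪g k, x k - xstar⟫ := by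
      intro δ hδ0 hδB
      set u := ‖g k‖⁻¹ • g k with hudef
      have hun : ‖u‖ = 1 := norm_smul_inv_norm (hgne k)
      clear_value u
      set y := xstar + δ • u with hy
      clear_value y
      have hyd : infDist y Xstar ≤ δ := by
        refine le_trans (infDist_le_dist_of_mem hxstar) ?_
        rw [dist_eq_norm]
        simp [hy, norm_smul, hun, abs_of_pos hδ0]
      have hfy : f y < f (x k) := by
        have h1 : f y - fstar ≤ L * infDist y Xstar ^ p := hHolder y
        have h2 : L * infDist y Xstar ^ p ≤ L * δ ^ p :=
          mul_le_mul_of_nonneg_left (Real.rpow_le_rpow infDist_nonneg hyd hp.le) hL.le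
        have h3 : L * δ ^ p < L * B ^ p :=
          mul_lt_mul_of_pos_left (Real.rpow_lt_rpow hδ0.le hδB hp) hL
        have h4 := hcon k hk
        linarith
      have h5 := hgsub k y hfy
      have hgu : ⟪g k, u⟫ = ‖g k‖ := by
        rw [hudef, real_inner_smul_right, real_inner_self_eq_norm_mul_norm]
        field_simp
      have h6 : ⟪g k, y - x k⟫ = δ * ‖g k‖ - ⟪g k, x k - xstar⟫ := by
        have hexp : y - x k = δ • u - (x k - xstar) := by rw [hy]; abel
        rw [hexp, inner_sub_right, real_inner_smul_right, hgu]
      linarith [h6 ▸ h5]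
    by_contra hlt
    push_neg at hlt
    have hhalf := claim (B/2) (by positivity) (by linarith)
    have hd2 : B / 2 ≤ ⟪g k, x k - xstar⟫ / ‖g k‖ := (le_div_iff₀ hg0).mpr hhalf
    obtain ⟨δ, hδ1, hδ2⟩ := exists_between ((div_lt_iff₀ hg0).mpr hlt)
    have hδ0 : 0 < δ := lt_of_le_of_lt (by positivity : (0:ℝ) ≤ B/2) (lt_of_le_of_lt hd2 hδ1)
    have := claim δ hδ0 hδ2
    have : δ ≤ ⟪g k, x k - xstar⟫ / ‖g k‖ := (le_div_iff₀ hg0).mpr this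
    linarith
  -- per-step decrease
  have hh : η * ε = η * R + S := by
    rw [hεdef]; field_simp
  have hstep : ∀ k, k < K → ‖x k - xstar‖ ≤ c₀ →
      ‖x (k+1) - xstar‖^2 ≤ ‖x k - xstar‖^2 - 2*η*t := by
    intro k hk hac
    have hg0 : (0:ℝ) < ‖g k‖ := norm_pos_iff.mpr (hgne k)
    set u := ‖g k‖⁻¹ • g k with hudef
    have hun : ‖u‖ = 1 := norm_smul_inv_norm (hgne k)
    clear_value u
    set v := x k - xstar with hv
    clear_value v
    have huv : B ≤ ⟪u, v⟫ := by
      rw [hudef, hv, real_inner_smul_left, inv_mul_eq_div, le_div_iff₀ hg0]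
      linarith [key k hk]
    have ha_gt : B < ‖v‖ := by
      refine lt_of_lt_of_le (hdist k hk) ?_
      rw [hv, ← dist_eq_norm]
      exact infDist_le_dist_of_mem hxstar
    set m := ‖v - η • u‖ with hm
    clear_value m
    have hm0 : 0 ≤ m := by rw [hm]; exact norm_nonneg _
    have hm2 : m^2 = ‖v‖^2 - 2*η*⟪u, v⟫ + η^2 := by
      rw [hm, norm_sub_sq_real, real_inner_smul_right, real_inner_comm, norm_smul, hun]
      rw [Real.norm_eq_abs, abs_of_pos hη]
      ring
    have hplus : ‖x (k+1) - xstar‖ ≤ m + η * ε := by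
      have hup : x (k+1) - xstar = (v - η • u) + (s k - η • r k) := by
        rw [hupd k, hv, hudef, smul_add]; abel
      rw [hup]
      refine le_trans (norm_add_le _ _) ?_
      have hsr : ‖s k - η • r k‖ ≤ S + η * R := by
        refine le_trans (norm_sub_le _ _) ?_
        rw [norm_smul, Real.norm_eq_abs, abs_of_pos hη]
        exact add_le_add (hs k) (mul_le_mul_of_nonneg_left (hr k) hη.le)
      linarith
    have h2η : (0:ℝ) ≤ 2*η := by linarith
    have huv2 : 2*η*(Γ + t) ≤ 2*η*⟪u, v⟫ := by
      rw [← hBdef]; exact mul_le_mul_of_nonneg_left huv h2η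
    have hΓ2' : 2*η*((η/2)*(1 - ε^2) + c₀*ε) ≤ 2*η*Γ := mul_le_mul_of_nonneg_left hΓ2 h2η
    have hA2 : ‖v‖^2 ≤ c₀^2 := pow_le_pow_left₀ (norm_nonneg v) hac 2
    have hηt : 0 ≤ η * t := mul_nonneg hη.le ht0
    have hstep1 : m^2 ≤ ‖v‖^2 - 2*η*Γ - 2*η*t + η^2 := by linarith [hm2, huv2]
    have hm2' : m^2 ≤ (c₀ - η*ε)^2 := by linarith [hstep1, hΓ2', hA2, hηt]
    have hch : η * ε ≤ c₀ := by
      have h1 : η * ε ≤ B := by rw [hBdef]; linarith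
      linarith [le_trans (le_trans h1 ha_gt.le) hac]
    have hq0 : 0 ≤ c₀ - η * ε := by linarith
    have hmc : m ≤ c₀ - η * ε := by
      have hsqrt := Real.sqrt_le_sqrt hm2'
      rwa [Real.sqrt_sq hm0, Real.sqrt_sq hq0] at hsqrt
    have hsq : ‖x (k+1) - xstar‖ * ‖x (k+1) - xstar‖ ≤ (m + η*ε) * (m + η*ε) :=
      mul_self_le_mul_self (norm_nonneg _) hplus
    have hcross : (η*ε) * m ≤ (η*ε) * (c₀ - η*ε) :=
      mul_le_mul_of_nonneg_left hmc (by positivity)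
    have hfin1 : ‖x (k+1) - xstar‖^2 ≤ m^2 + 2*(η*ε)*m + (η*ε)^2 := by
      linarith [hsq]
    linarith [hfin1, hstep1, hΓ2', hcross]
  -- telescoping
  have main : ∀ k, k ≤ K → ‖x k - xstar‖^2 ≤ c₀^2 - k * (2*η*t) := by
    intro k
    induction k with
    | zero => intro _; simp [hc₀]
    | succ n ih =>
      intro hnK
      have hn : n < K := hnK
      have h1 := ih (le_of_lt hn)
      have hac : ‖x n - xstar‖ ≤ c₀ := by
        have hpos : 0 ≤ (n:ℝ) * (2*η*t) := by positivity
        have hsq2 : ‖x n - xstar‖^2 ≤ c₀^2 := by linarith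
        have hs3 := Real.sqrt_le_sqrt hsq2
        rwa [Real.sqrt_sq (norm_nonneg _), Real.sqrt_sq hc₀0] at hs3
      have h2 := hstep n hn hac
      push_cast
      push_cast at h1
      linarith
  -- final contradiction
  obtain ⟨K', rfl⟩ : ∃ K', K = K' + 1 := ⟨K - 1, (Nat.succ_pred_eq_of_pos hK).symm⟩
  have hlast := main K' (Nat.le_succ K')
  have hc2 : c₀^2 = 2*η*((K':ℝ)+1)*t := by
    rw [htdef]
    push_cast
    field_simp
  have haB : B < ‖x K' - xstar‖ := by
    refine lt_of_lt_of_le (hdist K' (Nat.lt_succ_self K')) ?_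
    rw [← dist_eq_norm]
    exact infDist_le_dist_of_mem hxstar
  have hB2 : 2*η*t ≤ B^2 := by
    have h4 : 2*η*t ≤ 4*Γ*t := by
      linarith [mul_nonneg (by linarith : (0:ℝ) ≤ Γ - η/2) ht0]
    have hBsq : B^2 = (Γ + t)^2 := by rw [hBdef]
    linarith [sq_nonneg (Γ - t), hBsq, h4]
  have haB2 : B^2 < ‖x K' - xstar‖^2 := by
    linarith [mul_self_lt_mul_self hB0.le haB]
  push_cast at hlast
  linarith [hlast, hc2, haB2, hB2]
end

section
/- Let 0 < R < 1, S > 0 and c > 2S. For η > 0 define G(η) = max{ (η/2)(1 + (R + S/η)²), (η/2)(1 − (R + S/η)²) + c(R + S/η) }. Set η₁ = S/√(1 + R²), η₂ = √( S(2c − S)/(1 − R²) ) (the minimizer of the second branch), and η₃ = (c − S)/R. Then G attains its global minimum over (0, ∞) at one of the three points η₁, η₂, η₃; that is, there exists η̂ ∈ {η₁, η₂, η₃} such that G(η̂) ≤ G(η) for all η > 0. -/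
set_option maxHeartbeats 1000000


/-- the error-bound factor
`G(η) = max{(η/2)(1 + (R + S/η)²), (η/2)(1 − (R + S/η)²) + c(R + S/η)}` attains its global
minimum over `(0, ∞)` at one of the three points
`η₁ = S/√(1 + R²)`, `η₂ = √(S(2c − S)/(1 − R²))`, `η₃ = (c − S)/R`. -/
theorem optimal_step_size_three_candidates (R S c : ℝ) (hR0 : 0 < R) (hR1 : R < 1)
    (hS : 0 < S) (hc : 2 * S < c)
    (G : ℝ → ℝ)
    (hG : ∀ η : ℝ, G η = max ((η / 2) * (1 + (R + S / η) ^ 2))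
      ((η / 2) * (1 - (R + S / η) ^ 2) + c * (R + S / η)))
    (η₁ η₂ η₃ : ℝ)
    (hη₁ : η₁ = S / Real.sqrt (1 + R ^ 2))
    (hη₂ : η₂ = Real.sqrt (S * (2 * c - S) / (1 - R ^ 2)))
    (hη₃ : η₃ = (c - S) / R) :
    ∃ ηopt ∈ ({η₁, η₂, η₃} : Set ℝ), ∀ η : ℝ, 0 < η → G ηopt ≤ G η := by
  set A : ℝ → ℝ := fun η => (η / 2) * (1 + (R + S / η) ^ 2) with hA
  set B : ℝ → ℝ := fun η => (η / 2) * (1 - (R + S / η) ^ 2) + c * (R + S / η) with hB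
  have hG' : ∀ η : ℝ, G η = max (A η) (B η) := hG
  have h1R2 : (0:ℝ) < 1 - R ^ 2 := by nlinarith
  have hcS : 0 < c - S := by linarith
  have h2cS : 0 < 2 * c - S := by linarith
  have hη₃pos : 0 < η₃ := by rw [hη₃]; positivity
  have hkpos : 0 < S * (2 * c - S) / (1 - R ^ 2) := by positivity
  have hη₂pos : 0 < η₂ := by rw [hη₂]; exact Real.sqrt_pos.mpr hkpos
  have hη₂sq : (1 - R ^ 2) * η₂ ^ 2 = S * (2 * c - S) := by
    rw [hη₂, Real.sq_sqrt hkpos.le]; field_simp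
  have hη₃eq : R * η₃ = c - S := by rw [hη₃]; field_simp
  have hAform : ∀ η : ℝ, 0 < η →
      A η = (η / 2) * (1 + R ^ 2) + S ^ 2 / (2 * η) + R * S := by
    intro η hη; simp only [hA]; field_simp; ring
  have hBform : ∀ η : ℝ, 0 < η →
      B η = (η / 2) * (1 - R ^ 2) + (1 - R ^ 2) * η₂ ^ 2 / (2 * η) + c * R - R * S := by
    intro η hη; simp only [hB]; rw [hη₂sq]; field_simp; ring
  have hAB3 : A η₃ = B η₃ := by
    simp only [hA, hB, hη₃]
    have hR' : R ≠ 0 := hR0.ne'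
    field_simp
    ring
  have hABle : ∀ η : ℝ, 0 < η → R * η + S ≤ c → A η ≤ B η := by
    intro η hη h1
    have ht : 0 < R + S / η := by positivity
    have h2 : η * (R + S / η) ^ 2 = (R + S / η) * (R * η + S) := by
      field_simp
    simp only [hA, hB]
    nlinarith [mul_le_mul_of_nonneg_left h1 ht.le]
  clear_value A B
  clear hG hA hB
  by_cases hcase : η₂ ≤ η₃
  · -- minimizer is η₂
    refine ⟨η₂, by simp, ?_⟩
    intro η hη
    have hBmin : B η₂ ≤ B η := by
      have hdiff : B η - B η₂ = (1 - R ^ 2) * η₂ * (η - η₂) ^ 2 / (2 * η * η₂) := by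
        rw [hBform η hη, hBform η₂ hη₂pos]; field_simp; ring
      rw [← sub_nonneg, hdiff]; positivity
    have hG2 : G η₂ = B η₂ := by
      rw [hG']
      refine max_eq_right (hABle η₂ hη₂pos ?_)
      nlinarith
    rw [hG2, hG' η]
    exact le_trans hBmin (le_max_right _ _)
  · -- minimizer is η₃
    push_neg at hcase
    refine ⟨η₃, by simp, ?_⟩
    intro η hη
    have hG3 : G η₃ = A η₃ := by rw [hG', hAB3, max_self]
    have h3 : R ^ 2 * η₃ ^ 2 = (c - S) ^ 2 := by
      linear_combination (R * η₃ + c - S) * hη₃eq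
    have hS2 : S ^ 2 < (1 + R ^ 2) * η₃ ^ 2 := by
      nlinarith [sq_nonneg η₃, mul_pos hS hcS]
    rcases le_or_gt η₃ η with hle | hlt
    · -- G η ≥ A η ≥ A η₃
      have hdiff : A η - A η₃ = (η - η₃) * ((1 + R ^ 2) * η * η₃ - S ^ 2) / (2 * η * η₃) := by
        rw [hAform η hη, hAform η₃ hη₃pos]; field_simp; ring
      have hfac : 0 ≤ (η - η₃) * ((1 + R ^ 2) * η * η₃ - S ^ 2) := by
        have h4 : (1 + R ^ 2) * η₃ ^ 2 ≤ (1 + R ^ 2) * η * η₃ := by nlinarith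
        nlinarith
      have hAmin : A η₃ ≤ A η := by
        rw [← sub_nonneg, hdiff]; exact div_nonneg hfac (by positivity)
      rw [hG3, hG' η]
      exact le_trans hAmin (le_max_left _ _)
    · -- G η ≥ B η ≥ B η₃
      have hdiff : B η - B η₃ = (1 - R ^ 2) * (η - η₃) * (η * η₃ - η₂ ^ 2) / (2 * η * η₃) := by
        rw [hBform η hη, hBform η₃ hη₃pos]; field_simp; ring
      have hfac : 0 ≤ (1 - R ^ 2) * (η - η₃) * (η * η₃ - η₂ ^ 2) := by
        have h4 : η * η₃ ≤ η₂ ^ 2 := by nlinarith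
        have h5 : η - η₃ ≤ 0 := by linarith
        have h6 : 0 ≤ (η₃ - η) * (η₂ ^ 2 - η * η₃) := mul_nonneg (by linarith) (by linarith)
        nlinarith [mul_nonneg h1R2.le h6]
      have hBmin : B η₃ ≤ B η := by
        rw [← sub_nonneg, hdiff]; exact div_nonneg hfac (by positivity)
      rw [hG3, hAB3, hG' η]
      exact le_trans hBmin (le_max_right _ _)
end

section
/- Let g ∈ ℝ^d with ‖g‖ = 1, and let η, B, C, R be reals with η > 0, 0 < R < 1 and 0 < B < C. Then for all x, r ∈ ℝ^d satisfying ⟨g, x⟩ ≥ B, ‖r‖ ≤ R and ‖x‖ ≤ C, one has η‖g + r‖² − 2⟨x, g + r⟩ ≤ max{ η(1 + R²) + 2R√(η² + C² − 2ηB) − 2B, η(R² − 1) }. -/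
open RealInnerProductSpace

/-- Lemma 4.1, upper bound: for `‖g‖ = 1`, `η > 0`, `0 < R < 1`, `0 < B < C`,
and any `x, r` with `⟪g, x⟫ ≥ B`, `‖r‖ ≤ R`, `‖x‖ ≤ C`, the objective
`η‖g + r‖² − 2⟪x, g + r⟫` is bounded by
`max{η(1 + R²) + 2R√(η² + C² − 2ηB) − 2B, η(R² − 1)}`. -/
theorem auxiliary_objective_upper_bound {d : ℕ} (g : EuclideanSpace ℝ (Fin d))
    (hg : ‖g‖ = 1) (η B C R : ℝ) (hη : 0 < η) (hR0 : 0 < R) (hR1 : R < 1)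
    (hB : 0 < B) (hBC : B < C)
    (x r : EuclideanSpace ℝ (Fin d))
    (hgx : B ≤ ⟪g, x⟫) (hr : ‖r‖ ≤ R) (hx : ‖x‖ ≤ C) :
    η * ‖g + r‖ ^ 2 - 2 * ⟪x, g + r⟫ ≤
      max (η * (1 + R ^ 2) + 2 * R * Real.sqrt (η ^ 2 + C ^ 2 - 2 * η * B) - 2 * B)
        (η * (R ^ 2 - 1)) := by
  refine le_trans ?_ (le_max_left _ _)
  -- Expand the objective
  have hexp : η * ‖g + r‖ ^ 2 - 2 * ⟪x, g + r⟫
      = η + η * ‖r‖ ^ 2 + 2 * ⟪η • g - x, r⟫ - 2 * ⟪g, x⟫ := by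
    have h1 : ‖g + r‖ ^ 2 = ‖g‖ ^ 2 + 2 * ⟪g, r⟫ + ‖r‖ ^ 2 := by
      rw [← norm_add_sq_real]
    have h2 : ⟪x, g + r⟫ = ⟪x, g⟫ + ⟪x, r⟫ := inner_add_right x g r
    have h3 : ⟪η • g - x, r⟫ = η * ⟪g, r⟫ - ⟪x, r⟫ := by
      rw [inner_sub_left, real_inner_smul_left]
    have h4 : ⟪g, x⟫ = ⟪x, g⟫ := real_inner_comm x g
    rw [h1, h2, h3, h4, hg]; ring
  rw [hexp]
  have hsq : ‖η • g - x‖ ^ 2 ≤ η ^ 2 + C ^ 2 - 2 * η * B := by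
    have h5 : ‖η • g - x‖ ^ 2 = η ^ 2 * ‖g‖ ^ 2 - 2 * (η * ⟪g, x⟫) + ‖x‖ ^ 2 := by
      rw [← real_inner_self_eq_norm_sq, inner_sub_sub_self]
      simp only [real_inner_smul_left, real_inner_smul_right, real_inner_self_eq_norm_sq,
        real_inner_comm x g, norm_smul, Real.norm_eq_abs, abs_of_pos hη, mul_pow]
      ring
    rw [h5, hg]
    have hx2 : ‖x‖ ^ 2 ≤ C ^ 2 := by
      apply sq_le_sq' _ hx; linarith [norm_nonneg x]
    nlinarith [hη.le]
  have hnorm : ‖η • g - x‖ ≤ Real.sqrt (η ^ 2 + C ^ 2 - 2 * η * B) := by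
    rw [← Real.sqrt_sq (norm_nonneg (η • g - x))]
    exact Real.sqrt_le_sqrt (by simpa using hsq)
  have hcs : ⟪η • g - x, r⟫ ≤ Real.sqrt (η ^ 2 + C ^ 2 - 2 * η * B) * R := by
    calc ⟪η • g - x, r⟫ ≤ ‖η • g - x‖ * ‖r‖ := real_inner_le_norm _ _
    _ ≤ Real.sqrt (η ^ 2 + C ^ 2 - 2 * η * B) * R :=
        mul_le_mul hnorm hr (norm_nonneg r) (Real.sqrt_nonneg _)
  have hr2 : η * ‖r‖ ^ 2 ≤ η * R ^ 2 := by
    apply mul_le_mul_of_nonneg_left _ hη.le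
    apply sq_le_sq' _ hr; linarith [norm_nonneg r]
  nlinarith [hgx, hcs, hr2]
end

section
/- Let d ≥ 2, let g ∈ ℝ^d with ‖g‖ = 1, and let η, B, C, R be reals with η > 0, 0 < R < 1 and 0 < B < C. Then the value η(1 + R²) + 2R√(η² + C² − 2ηB) − 2B is the maximum of F(x, r) = η‖g + r‖² − 2⟨x, g + r⟩ over the feasible set {(x, r) ∈ ℝ^d × ℝ^d : ⟨g, x⟩ ≥ B, ‖r‖ ≤ R, ‖x‖ ≤ C}; in particular there exist feasible (x, r) attaining this value. -/
open RealInnerProductSpace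

set_option maxHeartbeats 1000000 in
/-- Corollary to Lemma 4.1: if `d ≥ 2`, the value
`η(1 + R²) + 2R√(η² + C² − 2ηB) − 2B` is the maximum of
`F(x, r) = η‖g + r‖² − 2⟪x, g + r⟫` over the feasible set
`{(x, r) : ⟪g, x⟫ ≥ B, ‖r‖ ≤ R, ‖x‖ ≤ C}`; in particular it is attained. -/
theorem auxiliary_objective_max_attained {d : ℕ} (hd : 2 ≤ d)
    (g : EuclideanSpace ℝ (Fin d)) (hg : ‖g‖ = 1)
    (η B C R : ℝ) (hη : 0 < η) (hR0 : 0 < R) (hR1 : R < 1) (hB : 0 < B) (hBC : B < C)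
    (F : EuclideanSpace ℝ (Fin d) → EuclideanSpace ℝ (Fin d) → ℝ)
    (hF : ∀ x r, F x r = η * ‖g + r‖ ^ 2 - 2 * ⟪x, g + r⟫)
    (V : ℝ)
    (hV : V = η * (1 + R ^ 2) + 2 * R * Real.sqrt (η ^ 2 + C ^ 2 - 2 * η * B) - 2 * B) :
    (∀ x r : EuclideanSpace ℝ (Fin d),
        B ≤ ⟪g, x⟫ → ‖r‖ ≤ R → ‖x‖ ≤ C → F x r ≤ V) ∧
    (∃ x r : EuclideanSpace ℝ (Fin d),
        B ≤ ⟪g, x⟫ ∧ ‖r‖ ≤ R ∧ ‖x‖ ≤ C ∧ F x r = V) := by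
  have hgg : ⟪g, g⟫ = (1 : ℝ) := by
    rw [real_inner_self_eq_norm_sq, hg]; norm_num
  -- abbreviations
  set S := Real.sqrt (η ^ 2 + C ^ 2 - 2 * η * B) with hSdef
  have hBC2 : B ^ 2 < C ^ 2 := by nlinarith
  have hargpos : 0 < η ^ 2 + C ^ 2 - 2 * η * B := by nlinarith [sq_nonneg (η - B)]
  have hS2 : S ^ 2 = η ^ 2 + C ^ 2 - 2 * η * B := Real.sq_sqrt hargpos.le
  have hSpos : 0 < S := Real.sqrt_pos.mpr hargpos
  -- key rewriting of F
  have key : ∀ x r : EuclideanSpace ℝ (Fin d),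
      F x r = η + η * ‖r‖ ^ 2 + 2 * ⟪η • g - x, r⟫ - 2 * ⟪g, x⟫ := by
    intro x r
    have h1 : ‖g + r‖ ^ 2 = ‖g‖ ^ 2 + 2 * ⟪g, r⟫ + ‖r‖ ^ 2 := norm_add_sq_real g r
    have h2 : ⟪x, g + r⟫ = ⟪g, x⟫ + ⟪x, r⟫ := by
      rw [inner_add_right, real_inner_comm x g]
    have h3 : ⟪η • g - x, r⟫ = η * ⟪g, r⟫ - ⟪x, r⟫ := by
      rw [inner_sub_left, real_inner_smul_left]
    rw [hF, h1, h2, h3, hg]; ring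
  constructor
  · -- upper bound
    intro x r hx hr hxC
    have hCS : ⟪η • g - x, r⟫ ≤ ‖η • g - x‖ * ‖r‖ := real_inner_le_norm _ _
    have hwsq : ‖η • g - x‖ ^ 2 ≤ S ^ 2 := by
      have := norm_sub_sq_real (η • g) x
      rw [norm_smul, real_inner_smul_left, hg] at this
      have hxsq : ‖x‖ ^ 2 ≤ C ^ 2 := by
        have := norm_nonneg x
        nlinarith
      rw [hS2]
      simp only [Real.norm_eq_abs, abs_of_pos hη] at this
      nlinarith
    have hw : ‖η • g - x‖ ≤ S := by
      nlinarith [norm_nonneg (η • g - x), hSpos, hwsq]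
    have hinner : ⟪η • g - x, r⟫ ≤ S * R :=
      hCS.trans (mul_le_mul hw hr (norm_nonneg r) hSpos.le)
    have hrsq : ‖r‖ ^ 2 ≤ R ^ 2 := by nlinarith [norm_nonneg r]
    have hmul : η * ‖r‖ ^ 2 ≤ η * R ^ 2 := mul_le_mul_of_nonneg_left hrsq hη.le
    rw [key, hV]
    linarith
  · -- attainment
    -- find a unit vector orthogonal to g
    have hgne : g ≠ 0 := by
      intro h; rw [h, norm_zero] at hg; norm_num at hg
    obtain ⟨v, hvmem, hvne⟩ : ∃ v : EuclideanSpace ℝ (Fin d), v ∈ (ℝ ∙ g)ᗮ ∧ v ≠ 0 := by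
      have h1 : Module.finrank ℝ (ℝ ∙ g) = 1 := finrank_span_singleton hgne
      have h2 := Submodule.finrank_add_finrank_orthogonal (K := (ℝ ∙ g))
      have h3 : Module.finrank ℝ (EuclideanSpace ℝ (Fin d)) = d :=
        finrank_euclideanSpace_fin
      have h4 : (ℝ ∙ g)ᗮ ≠ ⊥ := by
        intro hbot
        rw [hbot] at h2
        simp [h1, h3] at h2
        omega
      exact Submodule.exists_mem_ne_zero_of_ne_bot h4
    set u : EuclideanSpace ℝ (Fin d) := ‖v‖⁻¹ • v with hu
    have hvnorm : ‖v‖ ≠ 0 := norm_ne_zero_iff.mpr hvne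
    have hunorm : ‖u‖ = 1 := by
      rw [hu, norm_smul, norm_inv, norm_norm, inv_mul_cancel₀ hvnorm]
    have hgv : ⟪g, v⟫ = 0 := hvmem g (Submodule.mem_span_singleton_self g)
    have hgu : ⟪g, u⟫ = 0 := by
      rw [hu, real_inner_smul_right, hgv, mul_zero]
    have hug : ⟪u, g⟫ = 0 := by rw [real_inner_comm]; exact hgu
    have huu : ⟪u, u⟫ = (1 : ℝ) := by
      rw [real_inner_self_eq_norm_sq, hunorm]; norm_num
    -- square root of C² − B²
    set t := Real.sqrt (C ^ 2 - B ^ 2) with htdef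
    have ht2 : t ^ 2 = C ^ 2 - B ^ 2 := Real.sq_sqrt (by linarith)
    have ht0 : 0 ≤ t := Real.sqrt_nonneg _
    -- the optimizers
    set x : EuclideanSpace ℝ (Fin d) := B • g + (-t) • u with hxdef
    set a : ℝ := R * (η - B) / S with hadef
    set b : ℝ := R * t / S with hbdef
    set r : EuclideanSpace ℝ (Fin d) := a • g + b • u with hrdef
    -- norm of combinations
    have hnorm : ∀ c e : ℝ, ‖c • g + e • u‖ ^ 2 = c ^ 2 + e ^ 2 := by
      intro c e
      rw [norm_add_sq_real, norm_smul, norm_smul, real_inner_smul_left,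
        real_inner_smul_right, hgu, hunorm, hg]
      simp [Real.norm_eq_abs, sq_abs]
    have hxnorm : ‖x‖ = C := by
      have h1 : ‖x‖ ^ 2 = C ^ 2 := by
        rw [hxdef, hnorm]; nlinarith
      nlinarith [norm_nonneg x, hB.trans hBC]
    have hgx : ⟪g, x⟫ = B := by
      rw [hxdef, inner_add_right, real_inner_smul_right, real_inner_smul_right,
        hgg, hgu]; ring
    have hab : a ^ 2 + b ^ 2 = R ^ 2 := by
      rw [hadef, hbdef]
      field_simp
      nlinarith [hS2, ht2]
    have hrnorm : ‖r‖ = R := by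
      have h1 : ‖r‖ ^ 2 = R ^ 2 := by rw [hrdef, hnorm, hab]
      nlinarith [norm_nonneg r, hR0]
    refine ⟨x, r, le_of_eq hgx.symm, le_of_eq hrnorm, le_of_eq hxnorm, ?_⟩
    -- compute the inner product ⟪η•g − x, r⟫
    have hinner : ⟪η • g - x, r⟫ = R * S := by
      have hSne : S ≠ 0 := hSpos.ne'
      rw [hrdef, hxdef]
      simp only [inner_sub_left, inner_add_left, inner_add_right,
        real_inner_smul_left, real_inner_smul_right, hgg, hgu, hug, huu]
      rw [hadef, hbdef]
      field_simp
      nlinarith [hS2, ht2]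
    rw [key, hinner, hgx, hrnorm, hV]
    ring
end

section
/- Let f : ℝ^d → ℝ, let x, x* ∈ ℝ^d, let M > 0, and let g ∈ ∂̄*f(x) with g ≠ 0. If the closed ball {y ∈ ℝ^d : ‖y − x*‖ ≤ M} is contained in the strict sublevel set {y : f(y) < f(x)}, then ⟨x − x*, g/‖g‖⟩ ≥ M. -/
open RealInnerProductSpace

/-- Lemma 6 of Kiwiel 2001: if `g` is a quasi-subgradient of `f` at `x`,
`g ≠ 0`, and the closed ball of radius `M` around `x*` is contained in the strict sublevel
set `{y : f y < f x}`, then `⟪x − x*, g/‖g‖⟫ ≥ M`. -/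
theorem quasi_subgradient_ball_bound {d : ℕ} (f : EuclideanSpace ℝ (Fin d) → ℝ)
    (x xstar : EuclideanSpace ℝ (Fin d)) (M : ℝ) (hM : 0 < M)
    (g : EuclideanSpace ℝ (Fin d))
    (hgsub : ∀ x' : EuclideanSpace ℝ (Fin d), f x' < f x → ⟪g, x' - x⟫ ≤ 0)
    (hgne : g ≠ 0)
    (hball : Metric.closedBall xstar M ⊆ {y | f y < f x}) :
    M ≤ ⟪x - xstar, ‖g‖⁻¹ • g⟫ := by
  have hgnorm : (0:ℝ) < ‖g‖ := norm_pos_iff.mpr hgne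
  set u : EuclideanSpace ℝ (Fin d) := ‖g‖⁻¹ • g with hu
  have hun : ‖u‖ = 1 := by
    simp [hu, norm_smul, abs_of_pos (inv_pos.mpr hgnorm),
      inv_mul_cancel₀ hgnorm.ne']
  set x' : EuclideanSpace ℝ (Fin d) := xstar + M • u with hx'
  have hmem : x' ∈ Metric.closedBall xstar M := by
    simp [hx', dist_eq_norm, norm_smul, hun, abs_of_pos hM]
  have hf : f x' < f x := hball hmem
  have h1 : ⟪g, x' - x⟫ ≤ 0 := hgsub x' hf
  have h2 : ⟪g, x' - x⟫ = M * ‖g‖ - ⟪g, x - xstar⟫ := by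
    have : x' - x = M • u - (x - xstar) := by
      simp [hx']; abel
    rw [this, inner_sub_right, inner_smul_right]
    have : ⟪g, u⟫ = ‖g‖ := by
      rw [hu, inner_smul_right, real_inner_self_eq_norm_sq]
      field_simp
    rw [this]
  have h3 : M * ‖g‖ ≤ ⟪g, x - xstar⟫ := by linarith [h2 ▸ h1]
  have : ⟪x - xstar, u⟫ = ‖g‖⁻¹ * ⟪g, x - xstar⟫ := by
    rw [hu, real_inner_smul_right, real_inner_comm]
  rw [this]
  calc M = M * ‖g‖ * ‖g‖⁻¹ := by field_simp
    _ ≤ ⟪g, x - xstar⟫ * ‖g‖⁻¹ := by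
        exact mul_le_mul_of_nonneg_right h3 (inv_pos.mpr hgnorm).le
    _ = ‖g‖⁻¹ * ⟪g, x - xstar⟫ := by ring
end

section
/- Let g ∈ ℝ^d with ‖g‖ = 1, and let η, B, C, R be reals with η > 0, 0 < R < 1 and 0 < B < C. Let K = {(x, r) ∈ ℝ^d × ℝ^d : ⟨g, x⟩ ≥ B, ‖r‖ ≤ R, ‖x‖ ≤ C} and F(x, r) = η‖g + r‖² − 2⟨x, g + r⟩. If (x★, r★) ∈ K satisfies F(x★, r★) ≥ F(x, r) for all (x, r) ∈ K, then ⟨r★, η·g − x★⟩ ≥ 0. -/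
open RealInnerProductSpace

/-- at any maximizer `(x★, r★)` of `F(x, r) = η‖g + r‖² − 2⟪x, g + r⟫` over
`K = {(x, r) : ⟪g, x⟫ ≥ B, ‖r‖ ≤ R, ‖x‖ ≤ C}`, one has `⟪r★, ηg − x★⟫ ≥ 0`. -/
theorem maximizer_inner_nonneg {d : ℕ} (g : EuclideanSpace ℝ (Fin d)) (hg : ‖g‖ = 1)
    (η B C R : ℝ) (hη : 0 < η) (hR0 : 0 < R) (hR1 : R < 1) (hB : 0 < B) (hBC : B < C)
    (K : Set (EuclideanSpace ℝ (Fin d) × EuclideanSpace ℝ (Fin d)))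
    (hK : K = {p | B ≤ ⟪g, p.1⟫ ∧ ‖p.2‖ ≤ R ∧ ‖p.1‖ ≤ C})
    (F : EuclideanSpace ℝ (Fin d) → EuclideanSpace ℝ (Fin d) → ℝ)
    (hF : ∀ x r, F x r = η * ‖g + r‖ ^ 2 - 2 * ⟪x, g + r⟫)
    (xs rs : EuclideanSpace ℝ (Fin d)) (hmem : (xs, rs) ∈ K)
    (hmax : ∀ p ∈ K, F p.1 p.2 ≤ F xs rs) :
    0 ≤ ⟪rs, η • g - xs⟫ := by
  subst hK
  obtain ⟨h1, h2, h3⟩ := hmem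
  have hmem' : (xs, -rs) ∈ {p : EuclideanSpace ℝ (Fin d) × EuclideanSpace ℝ (Fin d) |
      B ≤ ⟪g, p.1⟫ ∧ ‖p.2‖ ≤ R ∧ ‖p.1‖ ≤ C} := ⟨h1, by simpa using h2, h3⟩
  have hle := hmax (xs, -rs) hmem'
  rw [hF, hF] at hle
  simp only [← sub_eq_add_neg] at hle
  have e1 : ‖g + rs‖ ^ 2 = ‖g‖ ^ 2 + 2 * ⟪g, rs⟫ + ‖rs‖ ^ 2 := norm_add_sq_real g rs
  have e2 : ‖g - rs‖ ^ 2 = ‖g‖ ^ 2 - 2 * ⟪g, rs⟫ + ‖rs‖ ^ 2 := norm_sub_sq_real g rs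
  have e3 : ⟪xs, g + rs⟫ = ⟪xs, g⟫ + ⟪xs, rs⟫ := inner_add_right _ _ _
  have e4 : ⟪xs, g - rs⟫ = ⟪xs, g⟫ - ⟪xs, rs⟫ := inner_sub_right _ _ _
  have e5 : ⟪rs, η • g - xs⟫ = η * ⟪rs, g⟫ - ⟪rs, xs⟫ := by
    rw [inner_sub_right, inner_smul_right]
  have s1 : ⟪rs, g⟫ = ⟪g, rs⟫ := real_inner_comm _ _
  have s2 : ⟪rs, xs⟫ = ⟪xs, rs⟫ := real_inner_comm _ _
  rw [e5, s1, s2]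
  rw [e1, e2, e3, e4] at hle
  nlinarith [hle]
end

section
/- Let g ∈ ℝ^d with ‖g‖ = 1, and let η, B, C, R be reals with η > 0, 0 < R < 1 and 0 < B < C. Let K = {(x, r) ∈ ℝ^d × ℝ^d : ⟨g, x⟩ ≥ B, ‖r‖ ≤ R, ‖x‖ ≤ C} and F(x, r) = η‖g + r‖² − 2⟨x, g + r⟩. If (x★, r★) ∈ K satisfies F(x★, r★) ≥ F(x, r) for all (x, r) ∈ K, then ‖r★‖ = R. -/
open RealInnerProductSpace

/-- at any maximizer `(x★, r★)` of `F(x, r) = η‖g + r‖² − 2⟪x, g + r⟫` over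
`K = {(x, r) : ⟪g, x⟫ ≥ B, ‖r‖ ≤ R, ‖x‖ ≤ C}`, the constraint `‖r‖ ≤ R` is active:
`‖r★‖ = R`. -/
theorem maximizer_error_norm_eq {d : ℕ} (g : EuclideanSpace ℝ (Fin d)) (hg : ‖g‖ = 1)
    (η B C R : ℝ) (hη : 0 < η) (hR0 : 0 < R) (hR1 : R < 1) (hB : 0 < B) (hBC : B < C)
    (K : Set (EuclideanSpace ℝ (Fin d) × EuclideanSpace ℝ (Fin d)))
    (hK : K = {p | B ≤ ⟪g, p.1⟫ ∧ ‖p.2‖ ≤ R ∧ ‖p.1‖ ≤ C})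
    (F : EuclideanSpace ℝ (Fin d) → EuclideanSpace ℝ (Fin d) → ℝ)
    (hF : ∀ x r, F x r = η * ‖g + r‖ ^ 2 - 2 * ⟪x, g + r⟫)
    (xs rs : EuclideanSpace ℝ (Fin d)) (hmem : (xs, rs) ∈ K)
    (hmax : ∀ p ∈ K, F p.1 p.2 ≤ F xs rs) :
    ‖rs‖ = R := by
  subst hK
  obtain ⟨h1, h2, h3⟩ := hmem
  by_contra hne
  have hlt : ‖rs‖ < R := lt_of_le_of_ne h2 hne
  set ε : ℝ := R - ‖rs‖ with hε
  have hε0 : 0 < ε := by simp [hε]; linarith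
  have hεg : ‖ε • g‖ = ε := by
    rw [norm_smul, hg, Real.norm_eq_abs, abs_of_pos hε0, mul_one]
  have hp : (xs, rs + ε • g) ∈ {p : EuclideanSpace ℝ (Fin d) × EuclideanSpace ℝ (Fin d) |
      B ≤ ⟪g, p.1⟫ ∧ ‖p.2‖ ≤ R ∧ ‖p.1‖ ≤ C} := by
    refine ⟨h1, ?_, h3⟩
    calc ‖rs + ε • g‖ ≤ ‖rs‖ + ‖ε • g‖ := norm_add_le _ _
      _ = R := by rw [hεg]; ring
  have hm : (xs, rs - ε • g) ∈ {p : EuclideanSpace ℝ (Fin d) × EuclideanSpace ℝ (Fin d) |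
      B ≤ ⟪g, p.1⟫ ∧ ‖p.2‖ ≤ R ∧ ‖p.1‖ ≤ C} := by
    refine ⟨h1, ?_, h3⟩
    calc ‖rs - ε • g‖ ≤ ‖rs‖ + ‖ε • g‖ := norm_sub_le _ _
      _ = R := by rw [hεg]; ring
  have key1 := hmax _ hp
  have key2 := hmax _ hm
  simp only [hF] at key1 key2
  have e1 : g + (rs + ε • g) = (g + rs) + ε • g := by abel
  have e2 : g + (rs - ε • g) = (g + rs) - ε • g := by abel
  rw [e1] at key1
  rw [e2] at key2
  rw [norm_add_sq_real] at key1
  rw [norm_sub_sq_real] at key2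
  rw [inner_add_right] at key1
  rw [inner_sub_right] at key2
  have hsq : ‖ε • g‖ ^ 2 = ε ^ 2 := by rw [hεg]
  rw [hsq] at key1 key2
  nlinarith [mul_pos hη (pow_pos hε0 2)]
end

section
/- Let g ∈ ℝ^d with ‖g‖ = 1, and let η, B, C, R be reals with η > 0, 0 < R < 1 and 0 < B < C. Let K = {(x, r) ∈ ℝ^d × ℝ^d : ⟨g, x⟩ ≥ B, ‖r‖ ≤ R, ‖x‖ ≤ C} and F(x, r) = η‖g + r‖² − 2⟨x, g + r⟩. If (x★, r★) ∈ K satisfies F(x★, r★) ≥ F(x, r) for all (x, r) ∈ K, then ⟨x★, g⟩ = B. -/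
open RealInnerProductSpace Metric Filter Topology

/-
For fixed `r★`, the objective is affine in `x` with slope `-2 (g + r★)`, so `x★` minimises
`⟪·, u⟫`, `u = g + r★`, over the `x`-slice of `K`. If `⟪g, x★⟫ > B`, the linear constraint is
inactive near `x★`, and convexity upgrades this local minimality on the ball `‖x‖ ≤ C` to
global minimality; the unique minimiser of `⟪·, u⟫` on that ball is `-(C / ‖u‖) • u`. But
`⟪g, u⟫ ≥ 1 - ‖r★‖ > 0`, so this point has `⟪g, x★⟫ ≤ 0 < B`.
-/

variable {E : Type*} [NormedAddCommGroup E] [InnerProductSpace ℝ E]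

theorem IsMinOn.of_inter_mem_nhds {f : E → ℝ} {s t : Set E} {x : E} (hx : x ∈ s)
    (hf : ConvexOn ℝ s f) (ht : t ∈ 𝓝 x) (hmin : IsMinOn f (s ∩ t) x) : IsMinOn f s x :=
  IsMinOn.of_isLocalMinOn_of_convexOn hx (mem_of_superset (inter_mem_nhdsWithin s ht) hmin) hf

theorem eq_neg_smul_of_isMinOn_inner_closedBall {u x : E} {C : ℝ} (hu : u ≠ 0)
    (hx : ‖x‖ ≤ C) (hmin : IsMinOn (fun y => ⟪y, u⟫) (closedBall 0 C) x) :
    x = -(C / ‖u‖) • u := by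
  set y := -(C / ‖u‖) • u
  have hu' : 0 < ‖u‖ := norm_pos_iff.mpr hu
  have hC : 0 ≤ C := (norm_nonneg x).trans hx
  have hy : ‖y‖ = C := by
    rw [norm_smul, norm_neg, Real.norm_of_nonneg (by positivity), div_mul_cancel₀ _ hu'.ne']
  have hxu : ⟪x, u⟫ ≤ -(C * ‖u‖) := by
    refine (hmin (mem_closedBall_zero_iff.mpr hy.le)).trans_eq ?_
    simp only [y, real_inner_smul_left, real_inner_self_eq_norm_sq]
    field_simp
  have hxy : C ^ 2 ≤ ⟪x, y⟫ := by
    calc C ^ 2 = -(C / ‖u‖) * -(C * ‖u‖) := by field_simp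
      _ ≤ -(C / ‖u‖) * ⟪x, u⟫ :=
        mul_le_mul_of_nonpos_left hxu (neg_nonpos.mpr (by positivity))
      _ = ⟪x, y⟫ := (real_inner_smul_right x u _).symm
  have hdist : ‖x - y‖ ^ 2 ≤ 0 := by
    rw [norm_sub_sq_real, hy]
    nlinarith [norm_nonneg x]
  exact sub_eq_zero.mp (norm_eq_zero.mp (by nlinarith [norm_nonneg (x - y)]))

theorem inner_add_pos_of_norm_lt {g r : E} (hr : ‖r‖ < ‖g‖) : 0 < ⟪g, g + r⟫ := by
  have hgr : -(‖g‖ * ‖r‖) ≤ ⟪g, r⟫ := neg_le_of_abs_le (abs_real_inner_le_norm g r)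
  rw [inner_add_right, real_inner_self_eq_norm_sq]
  nlinarith [norm_nonneg r]

theorem maximizer_linear_constraint_active_general {d : ℕ}
    (g : EuclideanSpace ℝ (Fin d)) (hg : ‖g‖ = 1)
    (η B C R : ℝ) (hR1 : R < 1) (hB : 0 < B)
    (K : Set (EuclideanSpace ℝ (Fin d) × EuclideanSpace ℝ (Fin d)))
    (hK : K = {p | B ≤ ⟪g, p.1⟫ ∧ ‖p.2‖ ≤ R ∧ ‖p.1‖ ≤ C})
    (F : EuclideanSpace ℝ (Fin d) → EuclideanSpace ℝ (Fin d) → ℝ)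
    (hF : ∀ x r, F x r = η * ‖g + r‖ ^ 2 - 2 * ⟪x, g + r⟫)
    (xs rs : EuclideanSpace ℝ (Fin d)) (hmem : (xs, rs) ∈ K)
    (hmax : ∀ p ∈ K, F p.1 p.2 ≤ F xs rs) :
    ⟪xs, g⟫ = B := by
  subst hK
  obtain ⟨hlin, hrR, hxC⟩ : B ≤ ⟪g, xs⟫ ∧ ‖rs‖ ≤ R ∧ ‖xs‖ ≤ C := hmem
  set u := g + rs
  have hgu : 0 < ⟪g, u⟫ := inner_add_pos_of_norm_lt (by linarith)
  have hmin : IsMinOn (fun y => ⟪y, u⟫) (closedBall 0 C ∩ {y | B ≤ ⟪g, y⟫}) xs := by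
    rintro y ⟨hyC, hyB⟩
    have := hmax (y, rs) ⟨hyB, hrR, mem_closedBall_zero_iff.mp hyC⟩
    simp only [hF] at this
    show ⟪xs, u⟫ ≤ ⟪y, u⟫
    linarith
  rw [real_inner_comm]
  by_contra hne
  have hnhds : {y | B ≤ ⟪g, y⟫} ∈ 𝓝 xs :=
    ((continuous_const.inner continuous_id).tendsto xs).eventually_const_le (hlin.lt_of_ne' hne)
  have hconv : ConvexOn ℝ (closedBall 0 C) fun y => ⟪y, u⟫ :=
    ((innerₛₗ ℝ u).convexOn (convex_closedBall _ C)).congr fun y _ => real_inner_comm y u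
  have hxs := eq_neg_smul_of_isMinOn_inner_closedBall (fun hu => by simp [hu] at hgu) hxC
    (hmin.of_inter_mem_nhds (mem_closedBall_zero_iff.mpr hxC) hconv hnhds)
  have hC : 0 ≤ C := (norm_nonneg xs).trans hxC
  have hgxs : ⟪g, xs⟫ ≤ 0 := by
    rw [hxs, real_inner_smul_right, neg_mul]
    exact neg_nonpos.mpr (by positivity)
  linarith

/-- at any maximizer `(x★, r★)` of `F(x, r) = η‖g + r‖² − 2⟪x, g + r⟫` over
`K = {(x, r) : ⟪g, x⟫ ≥ B, ‖r‖ ≤ R, ‖x‖ ≤ C}`, the constraint `⟪g, x⟫ ≥ B` is active: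
`⟪x★, g⟫ = B`. -/
theorem maximizer_linear_constraint_active {d : ℕ}
    (g : EuclideanSpace ℝ (Fin d)) (hg : ‖g‖ = 1)
    (η B C R : ℝ) (hη : 0 < η) (hR0 : 0 < R) (hR1 : R < 1) (hB : 0 < B) (hBC : B < C)
    (K : Set (EuclideanSpace ℝ (Fin d) × EuclideanSpace ℝ (Fin d)))
    (hK : K = {p | B ≤ ⟪g, p.1⟫ ∧ ‖p.2‖ ≤ R ∧ ‖p.1‖ ≤ C})
    (F : EuclideanSpace ℝ (Fin d) → EuclideanSpace ℝ (Fin d) → ℝ)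
    (hF : ∀ x r, F x r = η * ‖g + r‖ ^ 2 - 2 * ⟪x, g + r⟫)
    (xs rs : EuclideanSpace ℝ (Fin d)) (hmem : (xs, rs) ∈ K)
    (hmax : ∀ p ∈ K, F p.1 p.2 ≤ F xs rs) :
    ⟪xs, g⟫ = B :=
  maximizer_linear_constraint_active_general g hg η B C R hR1 hB K hK F hF xs rs hmem hmax
end

section
/- Let f : ℝ^d → ℝ, let f* = inf_{y∈ℝ^d} f(y), assume X* = argmin f is nonempty, and assume f satisfies the Hölder condition of order p > 0 with constant L > 0 relative to ℝ^d. Then for every x ∈ ℝ^d with f(x) > f*, every x* ∈ X*, and every g ∈ ∂̄*f(x) with g ≠ 0, one has ⟨g/‖g‖, x − x*⟩ ≥ ((f(x) − f*)/L)^{1/p}. -/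
open RealInnerProductSpace Metric

/-- deterministic version of Lemma 2.4 of Hu et al. 2016: under the Hölder
condition of order `p` with constant `L` on `ℝ^d`, every nonzero quasi-subgradient `g` of
`f` at a non-optimal point `x` satisfies `⟪g/‖g‖, x − x*⟫ ≥ ((f(x) − f*)/L)^{1/p}`. -/
theorem quasi_subgradient_holder_bound {d : ℕ} (f : EuclideanSpace ℝ (Fin d) → ℝ)
    (fstar : ℝ) (hfstar : fstar = ⨅ y, f y)
    (Xstar : Set (EuclideanSpace ℝ (Fin d)))
    (hXstar : Xstar = {y | ∀ z, f y ≤ f z}) (hXne : Xstar.Nonempty)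
    (p L : ℝ) (hp : 0 < p) (hL : 0 < L)
    (hHolder : ∀ x : EuclideanSpace ℝ (Fin d), f x - fstar ≤ L * infDist x Xstar ^ p)
    (x : EuclideanSpace ℝ (Fin d)) (hx : fstar < f x)
    (xstar : EuclideanSpace ℝ (Fin d)) (hxstar : xstar ∈ Xstar)
    (g : EuclideanSpace ℝ (Fin d))
    (hgsub : ∀ x' : EuclideanSpace ℝ (Fin d), f x' < f x → ⟪g, x' - x⟫ ≤ 0)
    (hgne : g ≠ 0) :
    ((f x - fstar) / L) ^ (1 / p) ≤ ⟪‖g‖⁻¹ • g, x - xstar⟫ := by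
  have hgnorm : (0:ℝ) < ‖g‖ := norm_pos_iff.mpr hgne
  set u : EuclideanSpace ℝ (Fin d) := ‖g‖⁻¹ • g with hu
  have hunorm : ‖u‖ = 1 := by
    rw [hu, norm_smul, norm_inv, norm_norm, inv_mul_cancel₀ hgnorm.ne']
  set r : ℝ := ((f x - fstar) / L) ^ (1 / p) with hr
  have hbase : (0:ℝ) < (f x - fstar) / L := div_pos (by linarith) hL
  have hrpos : 0 < r := Real.rpow_pos_of_pos hbase _
  have hrp : r ^ p = (f x - fstar) / L := by
    rw [hr, one_div, Real.rpow_inv_rpow hbase.le hp.ne']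
  set c : ℝ := ⟪u, x - xstar⟫ with hc
  have key : ∀ t : ℝ, 0 ≤ t → t < r → t ≤ c := by
    intro t ht0 htr
    set x' : EuclideanSpace ℝ (Fin d) := xstar + t • u with hx'
    have hdist : infDist x' Xstar ≤ t := by
      refine (infDist_le_dist_of_mem hxstar).trans_eq ?_
      rw [hx', dist_eq_norm, add_sub_cancel_left, norm_smul, hunorm,
        Real.norm_eq_abs, abs_of_nonneg ht0, mul_one]
    have hfx' : f x' < f x := by
      have h1 : f x' - fstar ≤ L * infDist x' Xstar ^ p := hHolder x'
      have h2 : infDist x' Xstar ^ p ≤ t ^ p :=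
        Real.rpow_le_rpow infDist_nonneg hdist hp.le
      have h3 : t ^ p < r ^ p := Real.rpow_lt_rpow ht0 htr hp
      have h4 : L * r ^ p = f x - fstar := by
        rw [hrp]; field_simp
      nlinarith [infDist_nonneg (s := Xstar) (x := x')]
    have hsub := hgsub x' hfx'
    have hip : ⟪g, x' - x⟫ = ⟪g, xstar - x⟫ + t * ‖g‖ := by
      have : x' - x = (xstar - x) + t • u := by rw [hx']; abel
      rw [this, inner_add_right, real_inner_smul_right, hu,
        real_inner_smul_right, real_inner_self_eq_norm_sq, sq,
        inv_mul_cancel_left₀ hgnorm.ne']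
    have hcc : c = ‖g‖⁻¹ * ⟪g, x - xstar⟫ := by
      rw [hc, hu, real_inner_smul_left]
    have h5 : t * ‖g‖ ≤ ⟪g, x - xstar⟫ := by
      have : ⟪g, xstar - x⟫ = -⟪g, x - xstar⟫ := by
        rw [← inner_neg_right, neg_sub]
      rw [hip, this] at hsub
      linarith
    rw [hcc]
    rw [le_inv_mul_iff₀ hgnorm]
    linarith [h5]
  by_contra h
  push_neg at h
  obtain ⟨t, ht1, ht2⟩ := exists_between (max_lt h hrpos)
  have ht0 : 0 ≤ t := le_of_lt (lt_of_le_of_lt (le_max_right c 0) ht1)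
  have := key t ht0 ht2
  exact absurd this (not_le.mpr (lt_of_le_of_lt (le_max_left c 0) ht1))
end

section
/- Let (𝓕_k)_{k≥0} be a filtration on a probability space, and let (Y_k), (Z_k), (W_k) be sequences of nonnegative integrable random variables such that for each k: Y_k, Z_k and W_k are 𝓕_k-measurable, E[Y_{k+1} | 𝓕_k] ≤ Y_k − Z_k + W_k almost surely, and ∑_{k=0}^{∞} W_k < ∞ almost surely. Then almost surely ∑_{k=0}^{∞} Z_k < ∞ and the sequence (Y_k) converges to a (finite) nonnegative random variable. -/
/-!
Set `M k = Y k + ∑_{j<k} (Z j - W j)`; the hypothesis on `E[Y (k+1) | 𝓕 k]` says exactly that `M`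
is a supermartingale, and `M k ≥ -∑_{j<k} W j`. Since `∑_{j≤k} W j` is `𝓕 k`-measurable, freezing
`M` just before this partial sum first exceeds a level `a` is again a supermartingale, now bounded
below by an integrable variable, hence convergent almost surely. On the event `∑ W ≤ a` the frozen
process is `M` itself; letting `a` run through `ℕ` shows that `M` converges almost surely on
`{∑ W < ∞}`. Convergence of `M` and of `∑ W` then bounds the partial sums of `Z`, and `Y` is
the difference of convergent sequences.
-/

open MeasureTheory Filter
open scoped Topology

namespace MeasureTheory

variable {Ω : Type*} {m0 : MeasurableSpace Ω} {μ : Measure Ω} [IsFiniteMeasure μ]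
  {ℱ : Filtration ℕ m0} {f A : ℕ → Ω → ℝ}

theorem Supermartingale.integral_le (hf : Supermartingale f ℱ μ) {i j : ℕ} (hij : i ≤ j) :
    ∫ ω, f j ω ∂μ ≤ ∫ ω, f i ω ∂μ := by
  simpa using hf.setIntegral_le hij MeasurableSet.univ

theorem Supermartingale.exists_ae_tendsto_of_neg_le (hf : Supermartingale f ℱ μ) {g : Ω → ℝ}
    (hg : Integrable g μ) (hfg : ∀ n ω, -g ω ≤ f n ω) :
    ∀ᵐ ω ∂μ, ∃ c, Tendsto (fun n => f n ω) atTop (𝓝 c) := by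
  have hnorm : ∀ n, ∫ ω, ‖f n ω‖ ∂μ ≤ ∫ ω, f 0 ω ∂μ + 2 * ∫ ω, |g ω| ∂μ := fun n => calc
    ∫ ω, ‖f n ω‖ ∂μ ≤ ∫ ω, (f n ω + 2 * |g ω|) ∂μ := by
        refine integral_mono (hf.integrable n).norm ((hf.integrable n).add (hg.abs.const_mul 2))
          fun ω => ?_
        rw [Real.norm_eq_abs, abs_le]
        constructor <;> linarith [hfg n ω, le_abs_self (g ω), abs_nonneg (g ω)]
    _ = ∫ ω, f n ω ∂μ + 2 * ∫ ω, |g ω| ∂μ := by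
        rw [integral_add (hf.integrable n) (hg.abs.const_mul 2), integral_const_mul]
    _ ≤ ∫ ω, f 0 ω ∂μ + 2 * ∫ ω, |g ω| ∂μ := by grw [hf.integral_le n.zero_le]
  have hbdd : ∀ n, eLpNorm (-f n) 1 μ ≤ ENNReal.ofReal (∫ ω, f 0 ω ∂μ + 2 * ∫ ω, |g ω| ∂μ) := by
    intro n
    rw [eLpNorm_neg, eLpNorm_one_eq_lintegral_enorm,
      ← ofReal_integral_norm_eq_lintegral_enorm (hf.integrable n)]
    exact ENNReal.ofReal_le_ofReal (hnorm n)
  filter_upwards [hf.neg.exists_ae_tendsto_of_bdd hbdd] with ω ⟨c, hc⟩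
  exact ⟨-c, by simpa using hc.neg⟩

theorem Supermartingale.sum_mul_sub {R : ℝ} {ξ : ℕ → Ω → ℝ} (hf : Supermartingale f ℱ μ)
    (hξ : StronglyAdapted ℱ ξ) (hbdd : ∀ n ω, ξ n ω ≤ R) (hnonneg : ∀ n ω, 0 ≤ ξ n ω) :
    Supermartingale (fun n => ∑ k ∈ Finset.range n, ξ k * (f (k + 1) - f k)) ℱ μ := by
  have h := (hf.neg.sum_mul_sub hξ hbdd hnonneg).neg
  have heq : (-fun n => ∑ k ∈ Finset.range n, ξ k * ((-f) (k + 1) - (-f) k)) =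
      fun n => ∑ k ∈ Finset.range n, ξ k * (f (k + 1) - f k) := by
    funext n
    rw [Pi.neg_apply, ← Finset.sum_neg_distrib]
    refine Finset.sum_congr rfl fun k _ => ?_
    rw [Pi.neg_apply, Pi.neg_apply]
    ring
  rwa [heq] at h

/-- The transform of `f` by the predictable indicator of `{A (k + 1) ≤ a}`; for monotone `A` it is
`f` stopped at the first `n` with `a < A (n + 1)`. -/
noncomputable def stoppedBeforeExceeds (f A : ℕ → Ω → ℝ) (a : ℝ) (n : ℕ) : Ω → ℝ :=
  f 0 + ∑ k ∈ Finset.range n, {x | A (k + 1) x ≤ a}.indicator 1 * (f (k + 1) - f k)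

theorem stoppedBeforeExceeds_succ (a : ℝ) (n : ℕ) (ω : Ω) :
    stoppedBeforeExceeds f A a (n + 1) ω = if A (n + 1) ω ≤ a then
      stoppedBeforeExceeds f A a n ω + (f (n + 1) ω - f n ω)
    else stoppedBeforeExceeds f A a n ω := by
  simp only [stoppedBeforeExceeds, Finset.sum_range_succ, Pi.add_apply, Finset.sum_apply,
    Pi.mul_apply, Pi.sub_apply, Set.indicator_apply, Set.mem_ofPred_eq, Pi.one_apply]
  split_ifs <;> ring

theorem stoppedBeforeExceeds_eq_of_le {a : ℝ} {ω : Ω} (hA : Monotone fun n => A n ω) :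
    ∀ {n : ℕ}, A n ω ≤ a → stoppedBeforeExceeds f A a n ω = f n ω
  | 0, _ => by simp [stoppedBeforeExceeds]
  | n + 1, h => by
    rw [stoppedBeforeExceeds_succ, if_pos h,
      stoppedBeforeExceeds_eq_of_le hA ((hA n.le_succ).trans h)]
    ring

theorem neg_max_le_stoppedBeforeExceeds {a : ℝ} {ω : Ω} (hA : Monotone fun n => A n ω)
    (hfA : ∀ n, -A n ω ≤ f n ω) (n : ℕ) :
    -max (-f 0 ω) a ≤ stoppedBeforeExceeds f A a n ω := by
  induction n with
  | zero => simpa [stoppedBeforeExceeds] using neg_le.mpr (le_max_left _ a)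
  | succ n ih =>
    by_cases h : A (n + 1) ω ≤ a
    · rw [stoppedBeforeExceeds_eq_of_le hA h]
      linarith [hfA (n + 1), le_max_right (-f 0 ω) a]
    · rwa [stoppedBeforeExceeds_succ, if_neg h]

theorem supermartingale_stoppedBeforeExceeds (hf : Supermartingale f ℱ μ)
    (hA : StronglyAdapted ℱ fun n => A (n + 1)) (a : ℝ) :
    Supermartingale (stoppedBeforeExceeds f A a) ℱ μ := by
  have hξ : StronglyAdapted ℱ fun k => {x | A (k + 1) x ≤ a}.indicator (1 : Ω → ℝ) := fun k =>
    stronglyMeasurable_one.indicator (measurableSet_le (hA k).measurable measurable_const)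
  exact (martingale_const_fun ℱ μ (hf.stronglyAdapted 0) (hf.integrable 0)).supermartingale.add
    (hf.sum_mul_sub hξ (fun _ _ => Set.indicator_apply_le' (fun _ => le_rfl) fun _ => zero_le_one)
      fun _ => Set.indicator_nonneg fun _ _ => zero_le_one)

theorem Supermartingale.ae_exists_tendsto_of_bddAbove (hf : Supermartingale f ℱ μ)
    (hA : StronglyAdapted ℱ fun n => A (n + 1)) (hAmono : ∀ ω, Monotone fun n => A n ω)
    (hfA : ∀ n ω, -A n ω ≤ f n ω) :
    ∀ᵐ ω ∂μ, BddAbove (Set.range fun n => A n ω) → ∃ c, Tendsto (fun n => f n ω) atTop (𝓝 c) := by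
  have hlevel : ∀ a : ℕ, ∀ᵐ ω ∂μ,
      ∃ c, Tendsto (fun n => stoppedBeforeExceeds f A a n ω) atTop (𝓝 c) := fun a =>
    (supermartingale_stoppedBeforeExceeds hf hA a).exists_ae_tendsto_of_neg_le
      ((hf.integrable 0).neg.sup (integrable_const _))
      fun n ω => neg_max_le_stoppedBeforeExceeds (hAmono ω) (fun n => hfA n ω) n
  filter_upwards [ae_all_iff.2 hlevel] with ω hω ⟨b, hb⟩
  obtain ⟨a, ha⟩ := exists_nat_ge b
  obtain ⟨c, hc⟩ := hω a
  exact ⟨c, hc.congr fun n => stoppedBeforeExceeds_eq_of_le (hAmono ω) ((hb ⟨n, rfl⟩).trans ha)⟩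

theorem supermartingale_add_sum_of_condExp_le {Y V : ℕ → Ω → ℝ} (hYadp : StronglyAdapted ℱ Y)
    (hVadp : StronglyAdapted ℱ V) (hYint : ∀ k, Integrable (Y k) μ)
    (hVint : ∀ k, Integrable (V k) μ) (hcond : ∀ k, μ[Y (k + 1) | ℱ k] ≤ᵐ[μ] Y k - V k) :
    Supermartingale (fun k => Y k + ∑ j ∈ Finset.range k, V j) ℱ μ := by
  have hSadp : StronglyAdapted ℱ fun k => ∑ j ∈ Finset.range k, V j := fun k =>
    Finset.stronglyMeasurable_sum _ fun j hj =>
      hVadp.stronglyMeasurable_le (Finset.mem_range.1 hj).le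
  have hSint : ∀ k, Integrable (∑ j ∈ Finset.range k, V j) μ := fun k =>
    integrable_finsetSum' _ fun j _ => hVint j
  refine supermartingale_nat (hYadp.add hSadp) (fun k => (hYint k).add (hSint k)) fun k => ?_
  have hS : μ[∑ j ∈ Finset.range (k + 1), V j | ℱ k] = ∑ j ∈ Finset.range (k + 1), V j :=
    condExp_of_stronglyMeasurable (ℱ.le k) (Finset.stronglyMeasurable_sum _ fun j hj =>
      hVadp.stronglyMeasurable_le (Finset.mem_range_succ_iff.1 hj)) (hSint _)
  filter_upwards [condExp_add (hYint (k + 1)) (hSint (k + 1)) (ℱ k), hcond k] with ω h1 h2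
  rw [h1, Pi.add_apply, hS]
  simp only [Pi.add_apply, Pi.sub_apply, Finset.sum_apply, Finset.sum_range_succ] at h2 ⊢
  linarith

end MeasureTheory

theorem summable_and_tendsto_of_tendsto_add_sum_sub {y z w : ℕ → ℝ} {c : ℝ}
    (hy : ∀ n, 0 ≤ y n) (hz : ∀ n, 0 ≤ z n) (hw : Summable w)
    (hM : Tendsto (fun n => y n + ∑ k ∈ Finset.range n, (z k - w k)) atTop (𝓝 c)) :
    Summable z ∧ ∃ l, 0 ≤ l ∧ Tendsto y atTop (𝓝 l) := by
  have hMw := hM.add hw.hasSum.tendsto_sum_nat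
  have hMw_eq : ∀ n, y n + ∑ k ∈ Finset.range n, (z k - w k) + ∑ k ∈ Finset.range n, w k =
      y n + ∑ k ∈ Finset.range n, z k := fun n => by
    rw [Finset.sum_sub_distrib]; ring
  obtain ⟨b, hb⟩ := hMw.bddAbove_range
  have hzs : Summable z := summable_of_sum_range_le hz fun n => by
    linarith [hb ⟨n, rfl⟩, hMw_eq n, hy n]
  have hy_lim : Tendsto y atTop (𝓝 (c + ∑' k, w k - ∑' k, z k)) := by
    refine (hMw.sub hzs.hasSum.tendsto_sum_nat).congr fun n => ?_
    simp only [hMw_eq]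
    ring
  exact ⟨hzs, _, ge_of_tendsto' hy_lim hy, hy_lim⟩

/-- Lemma 2.5 of Hu et al. 2016, Robbins–Siegmund type: if `(Y_k)`, `(Z_k)`,
`(W_k)` are nonnegative integrable sequences adapted to a filtration `(𝓕_k)` with
`E[Y_{k+1} | 𝓕_k] ≤ Y_k − Z_k + W_k` a.s. and `∑ W_k < ∞` a.s., then a.s. `∑ Z_k < ∞`
and `(Y_k)` converges to a finite nonnegative limit. -/
theorem almost_supermartingale_convergence {Ω : Type*} {m : MeasurableSpace Ω}
    {μ : Measure Ω} [IsProbabilityMeasure μ]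
    (𝓕 : Filtration ℕ m) (Y Z W : ℕ → Ω → ℝ)
    (hYnn : ∀ k, ∀ ω, 0 ≤ Y k ω) (hZnn : ∀ k, ∀ ω, 0 ≤ Z k ω)
    (hWnn : ∀ k, ∀ ω, 0 ≤ W k ω)
    (hYint : ∀ k, Integrable (Y k) μ) (hZint : ∀ k, Integrable (Z k) μ)
    (hWint : ∀ k, Integrable (W k) μ)
    (hYmeas : ∀ k, StronglyMeasurable[𝓕 k] (Y k))
    (hZmeas : ∀ k, StronglyMeasurable[𝓕 k] (Z k))
    (hWmeas : ∀ k, StronglyMeasurable[𝓕 k] (W k))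
    (hcond : ∀ k, μ[Y (k + 1) | 𝓕 k] ≤ᵐ[μ] fun ω => Y k ω - Z k ω + W k ω)
    (hW : ∀ᵐ ω ∂μ, Summable fun k => W k ω) :
    ∀ᵐ ω ∂μ, (Summable fun k => Z k ω) ∧
      ∃ l : ℝ, 0 ≤ l ∧ Tendsto (fun k => Y k ω) atTop (nhds l) := by
  have hM : Supermartingale (fun k => Y k + ∑ j ∈ Finset.range k, (Z - W) j) 𝓕 μ :=
    supermartingale_add_sum_of_condExp_le hYmeas (fun k => (hZmeas k).sub (hWmeas k)) hYint
      (fun k => (hZint k).sub (hWint k)) fun k => (hcond k).trans_eq <| .of_forall fun ω => by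
        simp only [Pi.sub_apply]
        ring
  have hA : StronglyAdapted 𝓕 fun n ω => ∑ k ∈ Finset.range (n + 1), W k ω := fun n =>
    Finset.stronglyMeasurable_fun_sum _ fun k hk =>
      (hWmeas k).mono (𝓕.mono (Finset.mem_range_succ_iff.1 hk))
  have hAmono : ∀ ω, Monotone fun n => ∑ k ∈ Finset.range n, W k ω := fun ω =>
    monotone_nat_of_le_succ fun n => by
      simpa [Finset.sum_range_succ] using hWnn n ω
  have hMA : ∀ n ω, -∑ k ∈ Finset.range n, W k ω ≤ (Y n + ∑ j ∈ Finset.range n, (Z - W) j) ω := by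
    intro n ω
    simp only [Pi.add_apply, Finset.sum_apply, Pi.sub_apply, Finset.sum_sub_distrib]
    linarith [hYnn n ω, Finset.sum_nonneg fun k (_ : k ∈ Finset.range n) => hZnn k ω]
  filter_upwards [hM.ae_exists_tendsto_of_bddAbove (A := fun n ω => ∑ k ∈ Finset.range n, W k ω)
    hA hAmono hMA, hW] with ω hconv hWω
  obtain ⟨c, hc⟩ := hconv hWω.hasSum.tendsto_sum_nat.bddAbove_range
  exact summable_and_tendsto_of_tendsto_add_sum_sub (hYnn · ω) (hZnn · ω) hWω
    (by simpa [Finset.sum_apply] using hc)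
end
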